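/- arXiv:2508.07734 — 4 statements merged into one kernel-verified Lean document; each statement's English description precedes it below -/
import Mathlib

section
/- Let G be a finite abelian group equipped with a bilinear pairing ⟨·,·⟩ : G × G → ℚ/ℤ that is alternating (⟨x,x⟩ = 0 for all x) and non-degenerate (if ⟨x,y⟩ = 0 for all y then x = 0). Then the order of G is a perfect square. -/
/-!
All values of `B` are killed by `|G|`, so they lie in the finite cyclic group `⟨1/|G|⟩ ⊆ ℚ/ℤ`;
it suffices to treat pairings with values in a finite cyclic group `C`, by strong induction on
`|G|`. Let `n` be the exponent of `G` and `x₀` an element of order `n`. The range of `B x₀` is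
cyclic, generated by some `q = B x₀ y₀`, and nondegeneracy forces `q` to have order `n`. In a
cyclic group the elements killed by `n = ord q` are exactly the multiples of `q`, so
`g ↦ (B g x₀, B g y₀)` maps `G` onto `⟨q⟩ × ⟨q⟩` (alternation gives `B y₀ x₀ = -q`). Its kernel
`K`, the orthogonal complement of `{x₀, y₀}`, satisfies `|G| = n² |K|` and `G = ⟨x₀, y₀⟩ + K`,
hence `B` restricts to a nondegenerate alternating pairing on `K`.
-/

open AddSubgroup

theorem IsAddCyclic.mem_zmultiples_of_addOrderOf_nsmul_eq_zero {C : Type*} [AddCommGroup C]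
    [IsAddCyclic C] [Finite C] {q a : C} (ha : addOrderOf q • a = 0) : a ∈ zmultiples q := by
  have hq : zmultiples q = (nsmulAddMonoidHom (addOrderOf q) : C →+ C).ker := by
    refine eq_of_le_of_card_ge ?_ ?_
    · rw [zmultiples_le]
      exact addOrderOf_nsmul_eq_zero q
    · rw [IsAddCyclic.card_nsmulAddMonoidHom_ker, Nat.card_zmultiples,
        Nat.gcd_eq_right (addOrderOf_dvd_natCard q)]
  rw [hq]
  exact ha

theorem mem_zmultiples_inv_natCast_of_nsmul_eq_zero {n : ℕ} (hn : n ≠ 0)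
    {a : ℚ ⧸ zmultiples (1 : ℚ)} (ha : n • a = 0) :
    a ∈ zmultiples (((n : ℚ)⁻¹ : ℚ) : ℚ ⧸ zmultiples (1 : ℚ)) := by
  induction a using QuotientAddGroup.induction_on with | H r => ?_
  rw [← QuotientAddGroup.mk_nsmul, QuotientAddGroup.eq_zero_iff] at ha
  obtain ⟨k, hk⟩ := mem_zmultiples_iff.mp ha
  refine ⟨k, ?_⟩
  change k • (((n : ℚ)⁻¹ : ℚ) : ℚ ⧸ zmultiples (1 : ℚ)) = r
  rw [← QuotientAddGroup.mk_zsmul]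
  congr 1
  rw [zsmul_one, nsmul_eq_mul] at hk
  rw [zsmul_eq_mul, hk]
  field_simp

theorem finite_zmultiples_inv_natCast {n : ℕ} (hn : n ≠ 0) :
    Finite (zmultiples (((n : ℚ)⁻¹ : ℚ) : ℚ ⧸ zmultiples (1 : ℚ))) := by
  have hc : n • (((n : ℚ)⁻¹ : ℚ) : ℚ ⧸ zmultiples (1 : ℚ)) = 0 := by
    rw [← QuotientAddGroup.mk_nsmul, nsmul_eq_mul, mul_inv_cancel₀ (Nat.cast_ne_zero.mpr hn),
      QuotientAddGroup.eq_zero_iff]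
    exact mem_zmultiples 1
  refine Nat.finite_of_card_ne_zero ?_
  rw [Nat.card_zmultiples]
  exact (isOfFinAddOrder_iff_nsmul_eq_zero.mpr ⟨n, Nat.pos_of_ne_zero hn, hc⟩).addOrderOf_pos.ne'

namespace AddMonoidHom

variable {G C : Type*} [AddCommGroup G] [AddCommGroup C] (B : G →+ G →+ C)

theorem apply_swap_eq_neg_of_alternating (halt : ∀ x, B x x = 0) (x y : G) : B y x = -B x y := by
  have h := halt (x + y)
  rw [map_add, map_add, add_apply, add_apply, halt, halt, zero_add, add_zero] at h
  exact eq_neg_of_add_eq_zero_left h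

def flipProd (x₀ y₀ : G) : G →+ C × C :=
  (B.flip x₀).prod (B.flip y₀)

@[simp]
theorem flipProd_apply (x₀ y₀ g : G) : B.flipProd x₀ y₀ g = (B g x₀, B g y₀) :=
  rfl

section HyperbolicPair

variable {x₀ y₀ : G}

theorem range_flipProd_le (hx₀ : ∀ g, B g x₀ ∈ zmultiples (B x₀ y₀))
    (hy₀ : ∀ g, B g y₀ ∈ zmultiples (B x₀ y₀)) :
    (B.flipProd x₀ y₀).range ≤ (zmultiples (B x₀ y₀)).prod (zmultiples (B x₀ y₀)) := by
  rintro _ ⟨g, rfl⟩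
  exact mem_prod.mpr ⟨hx₀ g, hy₀ g⟩

theorem prod_zmultiples_le_map_flipProd (halt : ∀ x, B x x = 0) :
    (zmultiples (B x₀ y₀)).prod (zmultiples (B x₀ y₀)) ≤
      (closure {x₀, y₀}).map (B.flipProd x₀ y₀) := by
  rintro ⟨_, _⟩ hab
  obtain ⟨⟨i, rfl⟩, ⟨j, rfl⟩⟩ := mem_prod.mp hab
  have hx₀_mem : x₀ ∈ closure {x₀, y₀} := subset_closure (by simp)
  have hy₀_mem : y₀ ∈ closure {x₀, y₀} := subset_closure (by simp)
  refine ⟨j • x₀ - i • y₀, sub_mem (zsmul_mem hx₀_mem j) (zsmul_mem hy₀_mem i), ?_⟩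
  simp [halt, B.apply_swap_eq_neg_of_alternating halt x₀ y₀]

variable (halt : ∀ x, B x x = 0) (hx₀ : ∀ g, B g x₀ ∈ zmultiples (B x₀ y₀))
  (hy₀ : ∀ g, B g y₀ ∈ zmultiples (B x₀ y₀))
include halt hx₀ hy₀

theorem range_flipProd_eq :
    (B.flipProd x₀ y₀).range = (zmultiples (B x₀ y₀)).prod (zmultiples (B x₀ y₀)) :=
  (B.range_flipProd_le hx₀ hy₀).antisymm
    ((B.prod_zmultiples_le_map_flipProd halt).trans (map_le_range _ _))

theorem closure_pair_sup_ker_flipProd : closure {x₀, y₀} ⊔ (B.flipProd x₀ y₀).ker = ⊤ := by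
  rw [← codisjoint_iff, ← map_eq_range_iff]
  exact (map_le_range _ _).antisymm
    ((B.range_flipProd_le hx₀ hy₀).trans (B.prod_zmultiples_le_map_flipProd halt))

theorem card_eq_addOrderOf_sq_mul_card_ker_flipProd [Finite G] :
    Nat.card G = addOrderOf (B x₀ y₀) ^ 2 * Nat.card (B.flipProd x₀ y₀).ker := by
  rw [← (B.flipProd x₀ y₀).ker.card_mul_index, index_ker, B.range_flipProd_eq halt hx₀ hy₀,
    Nat.card_congr (prodEquiv _ _).toEquiv, Nat.card_prod, Nat.card_zmultiples, mul_comm, sq]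

theorem eq_zero_of_mem_ker_flipProd (hnd : ∀ x, (∀ y, B x y = 0) → x = 0) {x : G}
    (hx : x ∈ (B.flipProd x₀ y₀).ker) (horth : ∀ y ∈ (B.flipProd x₀ y₀).ker, B x y = 0) :
    x = 0 := by
  refine hnd x fun y => ?_
  have hpair : ({x₀, y₀} : Set G) ⊆ (B x).ker := by
    simp only [mem_ker, flipProd_apply, Prod.mk_eq_zero] at hx
    simp [Set.insert_subset_iff, hx]
  have htop : ⊤ ≤ (B x).ker := by
    rw [← B.closure_pair_sup_ker_flipProd halt hx₀ hy₀]
    exact sup_le ((closure_le _).mpr hpair) horth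
  exact htop (mem_top y)

end HyperbolicPair

theorem exists_addOrderOf_apply_eq_exponent [Finite G] [IsAddCyclic C]
    (hnd : ∀ x, (∀ y, B x y = 0) → x = 0) :
    ∃ x₀ y₀, addOrderOf (B x₀ y₀) = AddMonoid.exponent G := by
  obtain ⟨x₀, hx₀⟩ := AddMonoid.exists_addOrderOf_eq_exponent (.of_finite (G := G))
  obtain ⟨⟨_, y₀, rfl⟩, hgen⟩ := IsAddCyclic.exists_generator (α := (B x₀).range)
  refine ⟨x₀, y₀, ?_⟩
  have hdvd : addOrderOf (B x₀ y₀) ∣ addOrderOf x₀ := by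
    rw [addOrderOf_dvd_iff_nsmul_eq_zero, ← nsmul_apply, ← map_nsmul, addOrderOf_nsmul_eq_zero,
      map_zero, zero_apply]
  -- `B x₀ y₀` generates the range of `B x₀`, so `B x₀` kills `addOrderOf (B x₀ y₀) • x₀`.
  have hkill : addOrderOf (B x₀ y₀) • x₀ = 0 := by
    refine hnd _ fun y => ?_
    obtain ⟨k, hk⟩ := mem_zmultiples_iff.mp (hgen ⟨B x₀ y, y, rfl⟩)
    have hk' : k • B x₀ y₀ = B x₀ y := congrArg Subtype.val hk
    rw [map_nsmul, nsmul_apply, ← hk', smul_comm, addOrderOf_nsmul_eq_zero, smul_zero]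
  rw [← hx₀]
  exact hdvd.antisymm (addOrderOf_dvd_of_nsmul_eq_zero hkill)

theorem isSquare_card_of_alternating_of_nondegenerate [Finite G] [IsAddCyclic C] [Finite C]
    (halt : ∀ x, B x x = 0) (hnd : ∀ x, (∀ y, B x y = 0) → x = 0) :
    IsSquare (Nat.card G) := by
  induction hcard : Nat.card G using Nat.strong_induction_on generalizing G with
  | _ n ih =>
  subst hcard
  rcases subsingleton_or_nontrivial G with hG | hG
  · exact ⟨1, by rw [Nat.card_of_subsingleton (0 : G)]⟩
  obtain ⟨x₀, y₀, hq⟩ := B.exists_addOrderOf_apply_eq_exponent hnd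
  have hmem : ∀ g y, B g y ∈ zmultiples (B x₀ y₀) := fun g y =>
    IsAddCyclic.mem_zmultiples_of_addOrderOf_nsmul_eq_zero <| by
      rw [hq, ← nsmul_apply, ← map_nsmul, AddMonoid.exponent_nsmul_eq_zero, map_zero, zero_apply]
  have hcardG := B.card_eq_addOrderOf_sq_mul_card_ker_flipProd halt (hmem · x₀) (hmem · y₀)
  set K := (B.flipProd x₀ y₀).ker
  have hq2 : 2 ≤ addOrderOf (B x₀ y₀) := by
    have h0 := AddMonoid.exponent_ne_zero_of_finite (G := G)
    have h1 : AddMonoid.exponent G ≠ 1 := by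
      rw [Ne, AddMonoid.exp_eq_one_iff]
      exact not_subsingleton G
    omega
  have hlt : Nat.card K < Nat.card G := by
    rw [hcardG]
    exact lt_mul_of_one_lt_left Nat.card_pos (Nat.one_lt_pow two_ne_zero hq2)
  obtain ⟨m, hm⟩ := ih _ hlt ((B.comp K.subtype).compl₂ K.subtype) (fun x => halt x)
    (fun x hx => Subtype.ext <| B.eq_zero_of_mem_ker_flipProd halt (hmem · x₀) (hmem · y₀) hnd
      x.2 fun y hy => hx ⟨y, hy⟩) rfl
  exact ⟨addOrderOf (B x₀ y₀) * m, by rw [hcardG, hm]; ring⟩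

end AddMonoidHom

theorem card_isSquare_of_nondeg_alternating_pairing
    (G : Type*) [AddCommGroup G] [Fintype G]
    (B : G → G → ℚ ⧸ AddSubgroup.zmultiples (1 : ℚ))
    (hadd_left : ∀ x y z : G, B (x + y) z = B x z + B y z)
    (hadd_right : ∀ x y z : G, B x (y + z) = B x y + B x z)
    (halt : ∀ x : G, B x x = 0)
    (hnondeg : ∀ x : G, (∀ y : G, B x y = 0) → x = 0) :
    IsSquare (Fintype.card G) := by
  let B₀ : G →+ G →+ ℚ ⧸ zmultiples (1 : ℚ) :=
    .mk' (fun x => .mk' (B x) (hadd_right x)) fun x y => AddMonoidHom.ext (hadd_left x y)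
  let c : ℚ ⧸ zmultiples (1 : ℚ) := ((Fintype.card G : ℚ)⁻¹ : ℚ)
  have hval : ∀ x y, B₀ x y ∈ zmultiples c := fun x y =>
    mem_zmultiples_inv_natCast_of_nsmul_eq_zero Fintype.card_ne_zero <| by
      rw [← AddMonoidHom.nsmul_apply, ← map_nsmul, card_nsmul_eq_zero, map_zero,
        AddMonoidHom.zero_apply]
  have := finite_zmultiples_inv_natCast (Fintype.card_ne_zero (α := G))
  let B₁ : G →+ G →+ zmultiples c :=
    .mk' (fun x => (B₀ x).codRestrict _ (hval x)) fun x y => by ext; simp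
  rw [← Nat.card_eq_fintype_card]
  exact B₁.isSquare_card_of_alternating_of_nondegenerate (fun x => Subtype.ext (halt x))
    fun x hx => hnondeg x fun y => congrArg Subtype.val (hx y)
end

section
/- Let G be a finite abelian group with a non-degenerate alternating bilinear pairing ⟨·,·⟩ : G × G → ℚ/ℤ. Then there exists a subgroup H ⊆ G that is isotropic (⟨x,y⟩ = 0 for all x, y ∈ H) and satisfies (#H)² = #G. -/
/-!
Pairing a subgroup `H` against `G` embeds `G ⧸ H^⊥` into `Hom(H, ℚ/ℤ)` and, by nondegeneracy,
`H` into `Hom(G ⧸ H^⊥, ℚ/ℤ)`. Since `ℚ/ℤ` embeds into the circle, a finite abelian group `A` has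
at most `#A` characters, hence at most `#A` homomorphisms to `ℚ/ℤ`; so `#H * #H^⊥ = #G` for every
`H`. A maximal isotropic subgroup `H` equals `H^⊥`: an element of `H^⊥ \ H` could be adjoined to
`H`, because the pairing is alternating.
-/

local notation "ℚ/ℤ" => ℚ ⧸ AddSubgroup.zmultiples (1 : ℚ)

noncomputable def ratModIntToAddCircle : ℚ/ℤ →+ AddCircle (1 : ℝ) :=
  QuotientAddGroup.map _ _ (Rat.castHom ℝ).toAddMonoidHom <| by
    rw [AddSubgroup.zmultiples_le]
    simp

lemma ratModIntToAddCircle_injective : Function.Injective ratModIntToAddCircle := by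
  rw [injective_iff_map_eq_zero]
  intro t ht
  induction t using QuotientAddGroup.induction_on with
  | H q =>
    obtain ⟨n, hn⟩ := (AddCircle.coe_eq_zero_iff 1).1 ht
    rw [QuotientAddGroup.eq_zero_iff]
    refine ⟨n, ?_⟩
    simp only [zsmul_eq_mul, mul_one, RingHom.toAddMonoidHom_eq_coe, AddMonoidHom.coe_coe,
      eq_ratCast] at hn ⊢
    exact_mod_cast hn

noncomputable def ratModIntChar : AddChar ℚ/ℤ ℂ :=
  Circle.coeHom.compAddChar <|
    (AddChar.mk AddCircle.toCircle AddCircle.toCircle_zero AddCircle.toCircle_add).compAddMonoidHom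
      ratModIntToAddCircle

lemma ratModIntChar_injective : Function.Injective ratModIntChar :=
  Subtype.val_injective.comp <|
    (AddCircle.injective_toCircle one_ne_zero).comp ratModIntToAddCircle_injective

section FiniteDual

variable {A : Type*} [AddCommGroup A] [Finite A]

instance : Finite (A →+ ℚ/ℤ) :=
  Finite.of_injective _ (ratModIntChar.compAddMonoidHom_injective_right ratModIntChar_injective)

lemma card_addMonoidHom_ratModInt_le : Nat.card (A →+ ℚ/ℤ) ≤ Nat.card A := by
  have := Fintype.ofFinite A
  calc Nat.card (A →+ ℚ/ℤ) ≤ Nat.card (AddChar A ℂ) := Nat.card_le_card_of_injective _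
        (ratModIntChar.compAddMonoidHom_injective_right ratModIntChar_injective)
    _ = Nat.card A := by rw [Nat.card_eq_fintype_card, AddChar.card_eq, Nat.card_eq_fintype_card]

end FiniteDual

namespace AddMonoidHom

section Perp

variable {G M : Type*} [AddCommGroup G] [AddCommGroup M] (B : G →+ G →+ M)

def perp (H : AddSubgroup G) : AddSubgroup G := (B.comp H.subtype).flip.ker

variable {B} in
lemma mem_perp {H : AddSubgroup G} {g : G} : g ∈ B.perp H ↔ ∀ h ∈ H, B h g = 0 := by
  simp [perp, AddMonoidHom.ext_iff]

lemma perp_sup (H K : AddSubgroup G) : B.perp (H ⊔ K) = B.perp H ⊓ B.perp K := by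
  ext g
  simp only [AddSubgroup.mem_inf, mem_perp]
  constructor
  · intro hg
    exact ⟨fun h hh => hg h (AddSubgroup.mem_sup_left hh),
      fun k hk => hg k (AddSubgroup.mem_sup_right hk)⟩
  · rintro ⟨hH, hK⟩ _ hx
    obtain ⟨h, hh, k, hk, rfl⟩ := AddSubgroup.mem_sup.1 hx
    rw [map_add, AddMonoidHom.add_apply, hH h hh, hK k hk, add_zero]

lemma perp_zmultiples (z : G) : B.perp (AddSubgroup.zmultiples z) = (B z).ker := by
  ext g
  simp only [mem_perp, AddSubgroup.forall_mem_zmultiples, map_zsmul, AddMonoidHom.smul_apply,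
    AddMonoidHom.mem_ker]
  exact ⟨fun h => by simpa using h 1, fun h k => by rw [h, smul_zero]⟩

variable {B}

lemma apply_swap_eq_neg (hB : ∀ g, B g g = 0) (g h : G) : B h g = -B g h := by
  have := hB (g + h)
  simp only [map_add, AddMonoidHom.add_apply, hB, zero_add, add_zero] at this
  exact eq_neg_of_add_eq_zero_left this

lemma sup_zmultiples_le_perp (hB : ∀ g, B g g = 0) {H : AddSubgroup G} (hH : H ≤ B.perp H)
    {z : G} (hz : z ∈ B.perp H) :
    H ⊔ AddSubgroup.zmultiples z ≤ B.perp (H ⊔ AddSubgroup.zmultiples z) := by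
  have hzH : H ≤ (B z).ker := fun h hh => by
    rw [AddMonoidHom.mem_ker, apply_swap_eq_neg hB, mem_perp.1 hz h hh, neg_zero]
  have hzz : AddSubgroup.zmultiples z ≤ (B z).ker := by
    rw [AddSubgroup.zmultiples_le, AddMonoidHom.mem_ker, hB]
  rw [perp_sup, perp_zmultiples]
  exact sup_le (le_inf hH hzH) (le_inf (AddSubgroup.zmultiples_le.2 hz) hzz)

lemma exists_perp_eq_self [Finite G] (hB : ∀ g, B g g = 0) :
    ∃ H : AddSubgroup G, B.perp H = H := by
  obtain ⟨H, hH, hmax⟩ := Set.Finite.exists_maximal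
    (Set.toFinite {H : AddSubgroup G | H ≤ B.perp H}) ⟨⊥, (bot_le : ⊥ ≤ B.perp ⊥)⟩
  refine ⟨H, le_antisymm (fun z hz => ?_) hH⟩
  exact hmax (sup_zmultiples_le_perp hB hH hz) le_sup_left
    (AddSubgroup.mem_sup_right (AddSubgroup.mem_zmultiples z))

end Perp

section RatModInt

variable {G : Type*} [AddCommGroup G] [Finite G] {B : G →+ G →+ ℚ/ℤ}

variable (B) in
lemma card_le_card_mul_card_perp (H : AddSubgroup G) :
    Nat.card G ≤ Nat.card H * Nat.card (B.perp H) := by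
  rw [AddSubgroup.card_eq_card_quotient_mul_card_addSubgroup (B.perp H)]
  gcongr
  calc Nat.card (G ⧸ B.perp H) = Nat.card (B.comp H.subtype).flip.range :=
        Nat.card_congr (QuotientAddGroup.quotientKerEquivRange _).toEquiv
    _ ≤ Nat.card (H →+ ℚ/ℤ) := Nat.card_le_card_of_injective _ Subtype.val_injective
    _ ≤ Nat.card H := card_addMonoidHom_ratModInt_le

lemma card_mul_card_perp_le (hB : Function.Injective B)
    (H : AddSubgroup G) : Nat.card H * Nat.card (B.perp H) ≤ Nat.card G := by
  let f : H →+ (G ⧸ B.perp H →+ ℚ/ℤ) := AddMonoidHom.mk'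
    (fun h => QuotientAddGroup.lift _ (B h) fun g hg => mem_perp.1 hg h h.2)
    (fun h h' => by ext x; exact DFunLike.congr_fun (map_add B (h : G) h') x)
  have hf : Function.Injective f := by
    rw [injective_iff_map_eq_zero]
    intro h hh
    apply Subtype.ext
    apply hB
    rw [ZeroMemClass.coe_zero, map_zero]
    ext g
    exact DFunLike.congr_fun hh (g : G ⧸ B.perp H)
  rw [AddSubgroup.card_eq_card_quotient_mul_card_addSubgroup (B.perp H)]
  gcongr
  calc Nat.card H ≤ Nat.card (G ⧸ B.perp H →+ ℚ/ℤ) := Nat.card_le_card_of_injective _ hf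
    _ ≤ Nat.card (G ⧸ B.perp H) := card_addMonoidHom_ratModInt_le

lemma card_mul_card_perp (hB : Function.Injective B)
    (H : AddSubgroup G) : Nat.card H * Nat.card (B.perp H) = Nat.card G :=
  (card_mul_card_perp_le hB H).antisymm (card_le_card_mul_card_perp B H)

end RatModInt

end AddMonoidHom

theorem exists_isotropic_subgroup_card_sq
    (G : Type*) [AddCommGroup G] [Fintype G]
    (B : G → G → ℚ ⧸ AddSubgroup.zmultiples (1 : ℚ))
    (hadd_left : ∀ x y z : G, B (x + y) z = B x z + B y z)
    (hadd_right : ∀ x y z : G, B x (y + z) = B x y + B x z)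
    (halt : ∀ x : G, B x x = 0)
    (hnondeg : ∀ x : G, (∀ y : G, B x y = 0) → x = 0) :
    ∃ H : AddSubgroup G, (∀ x ∈ H, ∀ y ∈ H, B x y = 0) ∧
      Nat.card H ^ 2 = Fintype.card G := by
  let B' : G →+ G →+ ℚ/ℤ := AddMonoidHom.mk' (fun x => AddMonoidHom.mk' (B x) (hadd_right x))
    fun x y => by ext z; exact hadd_left x y z
  have hB' : Function.Injective B' :=
    (injective_iff_map_eq_zero B').2 fun x hx => hnondeg x fun y => DFunLike.congr_fun hx y
  obtain ⟨H, hH⟩ := AddMonoidHom.exists_perp_eq_self (B := B') halt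
  refine ⟨H, fun x hx y hy => AddMonoidHom.mem_perp.1 (hH ▸ hy) x hx, ?_⟩
  rw [← Nat.card_eq_fintype_card, ← AddMonoidHom.card_mul_card_perp hB' H, hH, sq]
end

section
/- Let X_1, …, X_n be independent real random variables, each uniformly distributed on {−1, +1}, and let a_1, …, a_n be real numbers. Then for every natural number r, the expectation E[(Σ_{j=1}^n a_j X_j)^{2r}] is at most ((2r)! / (r! · 2^r)) · (Σ_{j=1}^n a_j²)^r. -/
open MeasureTheory ProbabilityTheory Finset

/-- `2^m * m! ≤ (2m)!` -/
lemma aux_two_pow_mul_factorial_le (m : ℕ) : 2 ^ m * m.factorial ≤ (2 * m).factorial := by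
  induction m with
  | zero => simp
  | succ m ih =>
    have h1 : 2 * (m + 1) = (2 * m + 1) + 1 := by ring
    rw [h1, Nat.factorial_succ, Nat.factorial_succ, Nat.factorial_succ]
    calc 2 ^ (m + 1) * ((m + 1) * m.factorial)
        = (m + 1) * 2 * (2 ^ m * m.factorial) := by ring
      _ ≤ (2 * m + 1 + 1) * (2 ^ m * m.factorial) := by
          apply Nat.mul_le_mul_right
          omega
      _ ≤ (2 * m + 1 + 1) * ((2 * m + 1) * (2 * m).factorial) := by
          apply Nat.mul_le_mul_left
          calc 2 ^ m * m.factorial ≤ (2 * m).factorial := ih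
            _ ≤ (2 * m + 1) * (2 * m).factorial := Nat.le_mul_of_pos_left _ (by omega)

/-- Key combinatorial bound: `r! * 2^r * multinomial (2m) ≤ (2r)! * multinomial m`. -/
lemma aux_multinomial_double_le {α : Type*} (s : Finset α) (m : α → ℕ) :
    (∑ i ∈ s, m i).factorial * 2 ^ (∑ i ∈ s, m i) *
        Nat.multinomial s (fun i => 2 * m i)
      ≤ (2 * ∑ i ∈ s, m i).factorial * Nat.multinomial s m := by
  set r := ∑ i ∈ s, m i with hr
  have hspec1 : (∏ i ∈ s, (m i).factorial) * Nat.multinomial s m = r.factorial :=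
    Nat.multinomial_spec s m
  have hsum2 : ∑ i ∈ s, 2 * m i = 2 * r := by rw [hr, Finset.mul_sum]
  have hspec2 : (∏ i ∈ s, (2 * m i).factorial) * Nat.multinomial s (fun i => 2 * m i)
      = (2 * r).factorial := by
    have := Nat.multinomial_spec s (fun i => 2 * m i)
    rwa [hsum2] at this
  have hprod : 2 ^ r * ∏ i ∈ s, (m i).factorial ≤ ∏ i ∈ s, (2 * m i).factorial := by
    have h2 : (2 : ℕ) ^ r = ∏ i ∈ s, 2 ^ m i := by
      rw [hr, Finset.prod_pow_eq_pow_sum]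
    rw [h2, ← Finset.prod_mul_distrib]
    exact Finset.prod_le_prod' fun i _ => aux_two_pow_mul_factorial_le (m i)
  calc r.factorial * 2 ^ r * Nat.multinomial s (fun i => 2 * m i)
      = (2 ^ r * ∏ i ∈ s, (m i).factorial) *
          Nat.multinomial s (fun i => 2 * m i) * Nat.multinomial s m := by
        rw [← hspec1]; ring
    _ ≤ (∏ i ∈ s, (2 * m i).factorial) *
          Nat.multinomial s (fun i => 2 * m i) * Nat.multinomial s m :=
        Nat.mul_le_mul_right _ (Nat.mul_le_mul_right _ hprod)
    _ = (2 * r).factorial * Nat.multinomial s m := by rw [hspec2]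

/-- Integral of a finset product of independent random variables. -/
lemma aux_integral_prod {Ω : Type*} [MeasurableSpace Ω] (μ : Measure Ω)
    [IsProbabilityMeasure μ] {n : ℕ} (Y : Fin n → Ω → ℝ)
    (hm : ∀ j, Measurable (Y j))
    (hindep : iIndepFun Y μ) (s : Finset (Fin n)) :
    ∫ ω, ∏ j ∈ s, Y j ω ∂μ = ∏ j ∈ s, ∫ ω, Y j ω ∂μ := by
  classical
  induction s using Finset.cons_induction with
  | empty => simp
  | cons i s hi ih =>
    have hind : IndepFun (∏ j ∈ s, Y j) (Y i) μ :=
      hindep.indepFun_finsetProd_of_notMem hm hi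
    have hprodmeas : Measurable (∏ j ∈ s, Y j) := by
      apply Finset.prod_induction _ Measurable (fun f g hf hg => hf.mul hg)
      · exact measurable_const
      · exact fun j _ => hm j
    have hmul := hind.symm.integral_mul_eq_mul_integral (hm i).aestronglyMeasurable
      hprodmeas.aestronglyMeasurable
    calc ∫ ω, ∏ j ∈ Finset.cons i s hi, Y j ω ∂μ
        = integral μ (Y i * ∏ j ∈ s, Y j) := by
          apply integral_congr_ae
          filter_upwards with ω
          simp [Finset.prod_cons, Finset.prod_insert hi, Finset.prod_apply]
      _ = integral μ (Y i) * integral μ (∏ j ∈ s, Y j) := hmul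
      _ = ∏ j ∈ Finset.cons i s hi, ∫ ω, Y j ω ∂μ := by
          rw [Finset.prod_cons, ← ih]
          congr 1
          apply integral_congr_ae
          filter_upwards with ω
          simp [Finset.prod_apply]

/-- Moments of the Rademacher distribution. -/
lemma aux_rademacher_moment (k : ℕ) :
    ∫ x : ℝ, x ^ k ∂((2⁻¹ : ENNReal) • (Measure.dirac (-1 : ℝ) + Measure.dirac (1 : ℝ)))
      = if Even k then 1 else 0 := by
  have h1 : Integrable (fun x : ℝ => x ^ k) (Measure.dirac (-1 : ℝ)) := by
    apply (integrable_congr ?_).mpr (integrable_const ((-1 : ℝ) ^ k))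
    rw [Filter.EventuallyEq, MeasureTheory.ae_dirac_eq]; simp
  have h2 : Integrable (fun x : ℝ => x ^ k) (Measure.dirac (1 : ℝ)) := by
    apply (integrable_congr ?_).mpr (integrable_const ((1 : ℝ) ^ k))
    rw [Filter.EventuallyEq, MeasureTheory.ae_dirac_eq]; simp
  rw [integral_smul_measure, integral_add_measure h1 h2, integral_dirac, integral_dirac]
  rcases Nat.even_or_odd k with h | h
  · simp [h.neg_one_pow, if_pos h]
    norm_num
  · rw [h.neg_one_pow, if_neg (Nat.not_even_iff_odd.mpr h)]
    norm_num

theorem khintchine_moment_bound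
    {Ω : Type*} [MeasurableSpace Ω] (μ : Measure Ω) [IsProbabilityMeasure μ]
    (n : ℕ) (X : Fin n → Ω → ℝ)
    (hmeas : ∀ j, Measurable (X j))
    (hindep : iIndepFun X μ)
    (hdist : ∀ j, μ.map (X j)
      = (2⁻¹ : ENNReal) • (Measure.dirac (-1 : ℝ) + Measure.dirac (1 : ℝ)))
    (a : Fin n → ℝ) (r : ℕ) :
    ∫ ω, (∑ j, a j * X j ω) ^ (2 * r) ∂μ
      ≤ ((2 * r).factorial : ℝ) / ((r.factorial : ℝ) * 2 ^ r)
        * (∑ j, (a j) ^ 2) ^ r := by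
  classical
  set C : ℝ := ((2 * r).factorial : ℝ) / ((r.factorial : ℝ) * 2 ^ r) with hC
  -- moments of the individual variables
  have hmom : ∀ j k, ∫ ω, (X j ω) ^ k ∂μ = if Even k then (1 : ℝ) else 0 := by
    intro j k
    have h : ∫ ω, (X j ω) ^ k ∂μ = ∫ x, x ^ k ∂(μ.map (X j)) :=
      (integral_map (hmeas j).aemeasurable
        ((measurable_id.pow_const k).aestronglyMeasurable)).symm
    rw [h, hdist j, aux_rademacher_moment]
  -- a.e. the variables take values in {-1, 1}
  have hbd : ∀ᵐ ω ∂μ, ∀ j, X j ω ∈ ({-1, 1} : Set ℝ) := by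
    rw [ae_all_iff]
    intro j
    have hms : MeasurableSet ({-1, 1} : Set ℝ) :=
      (measurableSet_singleton (1 : ℝ)).insert (-1)
    have h0 : μ.map (X j) (({-1, 1} : Set ℝ)ᶜ) = 0 := by
      rw [hdist j]
      simp [Measure.dirac_apply' _ hms.compl]
    rw [Measure.map_apply (hmeas j) hms.compl] at h0
    rw [ae_iff]
    convert h0 using 2
    rfl
  -- integrability of products
  have hint : ∀ k : Fin n → ℕ, Integrable (fun ω => ∏ j, (X j ω) ^ (k j)) μ := by
    intro k
    have hm : Measurable fun ω => ∏ j, (X j ω) ^ (k j) :=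
      Finset.measurable_prod _ fun j _ => (hmeas j).pow_const _
    apply Integrable.mono' (integrable_const (1 : ℝ)) hm.aestronglyMeasurable
    filter_upwards [hbd] with ω hω
    rw [Real.norm_eq_abs, Finset.abs_prod]
    have : ∀ j ∈ Finset.univ, |X j ω ^ k j| = 1 := by
      intro j _
      rcases hω j with h | h <;> simp_all [abs_pow]
    rw [Finset.prod_congr rfl this, Finset.prod_const_one]
  -- expansion and computation of the integral
  have key : ∫ ω, (∑ j, a j * X j ω) ^ (2 * r) ∂μ
      = ∑ k ∈ piAntidiag (univ : Finset (Fin n)) (2 * r),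
          (Nat.multinomial univ k : ℝ) * (∏ j, a j ^ k j) *
            (if ∀ j, Even (k j) then (1 : ℝ) else 0) := by
    have hexp : ∀ ω, (∑ j, a j * X j ω) ^ (2 * r)
        = ∑ k ∈ piAntidiag (univ : Finset (Fin n)) (2 * r),
            (Nat.multinomial univ k : ℝ) * (∏ j, a j ^ k j) *
              ∏ j, (X j ω) ^ (k j) := by
      intro ω
      rw [Finset.sum_pow_eq_sum_piAntidiag]
      refine Finset.sum_congr rfl fun k _ => ?_
      rw [mul_assoc, ← Finset.prod_mul_distrib]
      simp_rw [mul_pow]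
    simp_rw [hexp]
    rw [integral_finset_sum _ (fun k _ => ((hint k).const_mul _))]
    refine Finset.sum_congr rfl fun k _ => ?_
    rw [integral_const_mul]
    congr 1
    have hYindep : iIndepFun
        (fun j => fun ω => (X j ω) ^ (k j)) μ :=
      hindep.comp (fun j x => x ^ (k j)) fun j => measurable_id.pow_const _
    have := aux_integral_prod μ (fun j ω => (X j ω) ^ (k j))
      (fun j => (hmeas j).pow_const _) hYindep Finset.univ
    rw [this]
    simp_rw [hmom]
    by_cases h : ∀ j, Even (k j)
    · rw [if_pos h]
      exact Finset.prod_eq_one fun j _ => if_pos (h j)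
    · rw [if_neg h]
      push_neg at h
      obtain ⟨j, hj⟩ := h
      exact Finset.prod_eq_zero (Finset.mem_univ j) (if_neg hj)
  rw [key]
  -- restrict to even multi-indices
  have hfilter : ∑ k ∈ piAntidiag (univ : Finset (Fin n)) (2 * r),
        (Nat.multinomial univ k : ℝ) * (∏ j, a j ^ k j) *
          (if ∀ j, Even (k j) then (1 : ℝ) else 0)
      = ∑ k ∈ (piAntidiag (univ : Finset (Fin n)) (2 * r)).filter
            (fun k => ∀ j, Even (k j)),
          (Nat.multinomial univ k : ℝ) * ∏ j, a j ^ k j := by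
    rw [Finset.sum_filter]
    refine Finset.sum_congr rfl fun k _ => ?_
    split <;> simp
  rw [hfilter]
  -- reindex even multi-indices by halving
  have hre : ∑ k ∈ (piAntidiag (univ : Finset (Fin n)) (2 * r)).filter
        (fun k => ∀ j, Even (k j)),
        (Nat.multinomial univ k : ℝ) * ∏ j, a j ^ k j
      = ∑ m ∈ piAntidiag (univ : Finset (Fin n)) r,
          (Nat.multinomial univ (fun j => 2 * m j) : ℝ) * ∏ j, a j ^ (2 * m j) := by
    refine Finset.sum_nbij' (fun k j => k j / 2) (fun m j => 2 * m j) ?_ ?_ ?_ ?_ ?_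
    · intro k hk
      rw [Finset.mem_filter, Finset.mem_piAntidiag] at hk
      obtain ⟨⟨hksum, -⟩, hkeven⟩ := hk
      rw [Finset.mem_piAntidiag]
      refine ⟨?_, fun j _ => Finset.mem_univ j⟩
      have h2 : ∀ j, 2 * (k j / 2) = k j := fun j => Nat.two_mul_div_two_of_even (hkeven j)
      have : 2 * ∑ j, k j / 2 = 2 * r := by
        rw [Finset.mul_sum]
        rw [Finset.sum_congr rfl fun j _ => h2 j]
        exact hksum
      exact Nat.eq_of_mul_eq_mul_left (by norm_num) this
    · intro m hm
      rw [Finset.mem_piAntidiag] at hm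
      obtain ⟨hmsum, -⟩ := hm
      rw [Finset.mem_filter, Finset.mem_piAntidiag]
      exact ⟨⟨by rw [← Finset.mul_sum, hmsum], fun j _ => Finset.mem_univ j⟩,
        fun j => ⟨m j, by ring⟩⟩
    · intro k hk
      rw [Finset.mem_filter] at hk
      funext j
      exact Nat.two_mul_div_two_of_even (hk.2 j)
    · intro m _
      funext j
      exact Nat.mul_div_cancel_left _ (by norm_num)
    · intro k hk
      rw [Finset.mem_filter] at hk
      have h2 : ∀ j, 2 * (k j / 2) = k j := fun j =>
        Nat.two_mul_div_two_of_even (hk.2 j)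
      congr 1
      · congr 1
        exact congrArg _ (funext fun j => (h2 j).symm)
      · exact Finset.prod_congr rfl fun j _ => by rw [h2 j]
  rw [hre]
  -- compare with the multinomial expansion of (∑ a_j²)^r
  have hrhs : (∑ j, (a j) ^ 2) ^ r
      = ∑ m ∈ piAntidiag (univ : Finset (Fin n)) r,
          (Nat.multinomial univ m : ℝ) * ∏ j, ((a j) ^ 2) ^ (m j) :=
    Finset.sum_pow_eq_sum_piAntidiag _ _ r
  rw [hrhs, Finset.mul_sum]
  refine Finset.sum_le_sum fun m hm => ?_
  rw [Finset.mem_piAntidiag] at hm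
  obtain ⟨hmsum, -⟩ := hm
  have hkey : (Nat.multinomial univ (fun j => 2 * m j) : ℝ)
      ≤ C * (Nat.multinomial univ m : ℝ) := by
    rw [hC, div_mul_eq_mul_div, le_div_iff₀ (by positivity)]
    have hnat := aux_multinomial_double_le (univ : Finset (Fin n)) m
    rw [hmsum] at hnat
    have := (Nat.cast_le (α := ℝ)).mpr hnat
    push_cast at this ⊢
    nlinarith [this]
  have hprodeq : ∏ j, a j ^ (2 * m j) = ∏ j, ((a j) ^ 2) ^ (m j) :=
    Finset.prod_congr rfl fun j _ => by rw [pow_mul]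
  rw [hprodeq]
  have hpos : (0 : ℝ) ≤ ∏ j, ((a j) ^ 2) ^ (m j) :=
    Finset.prod_nonneg fun j _ => pow_nonneg (sq_nonneg _) _
  calc (Nat.multinomial univ (fun j => 2 * m j) : ℝ) * ∏ j, ((a j) ^ 2) ^ (m j)
      ≤ (C * (Nat.multinomial univ m : ℝ)) * ∏ j, ((a j) ^ 2) ^ (m j) :=
        mul_le_mul_of_nonneg_right hkey hpos
    _ = C * ((Nat.multinomial univ m : ℝ) * ∏ j, ((a j) ^ 2) ^ (m j)) := by ring
end

section
/- Let G be a finite abelian group of odd order with a non-degenerate alternating bilinear pairing ⟨·,·⟩ : G × G → ℚ/ℤ. Then G is isomorphic to H × H for some finite abelian group H, and every maximal isotropic subgroup of G has order equal to √(#G). -/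
/-!
Non-degeneracy makes `g ↦ β g` an isomorphism of `G` onto its `ℚ/ℤ`-dual, and characters of a
subgroup extend to `G` because `ℚ/ℤ` is divisible; hence `#H^⊥ · #H = #G` for every subgroup `H`.
A maximal isotropic subgroup is its own orthogonal, so its order squared is `#G`.

For the structure, let `n` be the exponent of `G` and `x` an element of order `n`. Then `β x` has
order `n` as a character, so some value `β x y` has order `n`, and it generates the whole
`n`-torsion of `ℚ/ℤ`. This lets one project `G` onto `⟨x, y⟩ ≅ (ℤ/n)²` along the orthogonal
of `⟨x, y⟩`, on which `β` is again alternating and non-degenerate; induct on `#G`.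
-/

open AddSubgroup Function

local notation "ℚ/ℤ" => AddCircle (1 : ℚ)

namespace AddCircle

theorem torsion_rat_eq_zmultiples {n : ℕ} (hn : 0 < n) {c : ℚ/ℤ} (hc : addOrderOf c = n) :
    {u : ℚ/ℤ | n • u = 0} = zmultiples c := by
  have hreg : IsSMulRegular ℚ n := .of_right_eq_zero_of_smul fun _ ↦ by simp [hn.ne']
  refine (Set.eq_of_subset_of_ncard_le ?_ ?_ (finite_torsion 1 hn)).symm
  · rintro _ ⟨k, rfl⟩
    simp [← hc]
  · rw [← Nat.card_coe_set_eq (zmultiples c : Set ℚ/ℤ), SetLike.coe_sort_coe, Nat.card_zmultiples,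
      hc, Set.ncard_def]
    exact ENat.toNat_le_of_le_natCast (card_torsion_le_of_isSMulRegular 1 n hn.ne' hreg)

theorem card_torsion_rat {n : ℕ} (hn : 0 < n) : Nat.card {u : ℚ/ℤ // n • u = 0} = n := by
  have hc := addOrderOf_period_div (p := (1 : ℚ)) hn
  rw [← Set.coe_ofPred, torsion_rat_eq_zmultiples hn hc, SetLike.coe_sort_coe,
    Nat.card_zmultiples, hc]

end AddCircle

theorem card_zmod_addMonoidHom_addCircle_rat {n : ℕ} (hn : 0 < n) :
    Nat.card (ZMod n →+ ℚ/ℤ) = n :=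
  (Nat.card_congr ((ZMod.lift n).symm.trans
    ((zmultiplesHom _).subtypeEquiv fun u => by simp [natCast_zsmul]).symm)).trans
    (AddCircle.card_torsion_rat hn)

theorem card_addMonoidHom_addCircle_rat (A : Type*) [AddCommGroup A] [Finite A] :
    Nat.card (A →+ ℚ/ℤ) = Nat.card A := by
  classical
  obtain ⟨ι, _, n, hn, ⟨e⟩⟩ := AddCommGroup.equiv_directSum_zmod_of_finite' A
  rw [Nat.card_congr ((e.addMonoidHomCongrLeftEquiv).trans DFinsupp.liftAddHom.symm.toEquiv),
    Nat.card_congr (e.toEquiv.trans DFinsupp.equivFunOnFintype), Nat.card_pi, Nat.card_pi]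
  exact Finset.prod_congr rfl fun i _ => by
    rw [card_zmod_addMonoidHom_addCircle_rat (by grind), Nat.card_zmod]

theorem AddMonoidHom.exists_addOrderOf_apply_eq {A M : Type*} [AddGroup A] [Finite A]
    [AddCommGroup M] (f : A →+ M) : ∃ a, addOrderOf (f a) = addOrderOf f := by
  have : Finite f.range := (Set.finite_range f).to_subtype
  obtain ⟨⟨_, a, rfl⟩, ha⟩ := AddMonoid.exists_addOrderOf_eq_exponent
    (AddMonoid.ExponentExists.of_finite (G := f.range))
  refine ⟨a, (AddSubgroup.addOrderOf_coe _).trans (ha.trans ?_)⟩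
  refine Nat.dvd_antisymm (AddMonoid.exponent_dvd_iff_forall_nsmul_eq_zero.2 ?_)
    (addOrderOf_dvd_of_nsmul_eq_zero ?_)
  · rintro ⟨_, b, rfl⟩
    ext
    simp [← AddMonoidHom.nsmul_apply, addOrderOf_nsmul_eq_zero]
  · ext b
    simpa using congrArg Subtype.val (AddMonoid.exponent_nsmul_eq_zero (⟨f b, b, rfl⟩ : f.range))

theorem zsmul_eq_zero_of_dvd {G : Type*} [AddGroup G] {n : ℕ} (hexp : ∀ g : G, n • g = 0)
    {j : ℤ} (hj : (n : ℤ) ∣ j) (g : G) : j • g = 0 := by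
  obtain ⟨c, rfl⟩ := hj
  rw [mul_zsmul, natCast_zsmul, hexp]

namespace Pairing

variable {G : Type*} [AddCommGroup G] (β : G →+ G →+ ℚ/ℤ)

def orthogonal (H : AddSubgroup G) : AddSubgroup G := (β.compl₂ H.subtype).ker

variable {β}

theorem mem_orthogonal {H : AddSubgroup G} {g : G} : g ∈ orthogonal β H ↔ H ≤ (β g).ker := by
  simp [orthogonal, DFunLike.ext_iff, SetLike.le_def]

theorem mem_orthogonal_zmultiples {x g : G} : g ∈ orthogonal β (zmultiples x) ↔ β g x = 0 := by
  rw [mem_orthogonal, zmultiples_le, AddMonoidHom.mem_ker]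

theorem orthogonal_sup (H K : AddSubgroup G) :
    orthogonal β (H ⊔ K) = orthogonal β H ⊓ orthogonal β K := by
  ext g
  simp only [mem_inf, mem_orthogonal, sup_le_iff]

theorem card_orthogonal_mul_card [Finite G] (hβ : Injective β) (H : AddSubgroup G) :
    Nat.card (orthogonal β H) * Nat.card H = Nat.card G := by
  have hcard := card_addMonoidHom_addCircle_rat G
  have : Finite (G →+ ℚ/ℤ) := Nat.finite_of_card_ne_zero (hcard ▸ Nat.card_pos.ne')
  have hβ' : Bijective β := (Nat.bijective_iff_injective_and_card β).2 ⟨hβ, hcard.symm⟩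
  have hres : Surjective (β.compl₂ H.subtype) := fun χ => by
    obtain ⟨ψ, hψ⟩ := CharacterModule.dual_surjective_of_injective
      H.subtype.toIntLinearMap Subtype.val_injective χ
    obtain ⟨g, rfl⟩ := hβ'.2 ψ
    exact ⟨g, hψ⟩
  rw [← card_addMonoidHom_addCircle_rat H,
    ← Nat.card_congr (QuotientAddGroup.quotientKerEquivOfSurjective _ hres).toEquiv, mul_comm]
  exact (card_eq_card_quotient_mul_card_addSubgroup _).symm

section Alternating

variable (halt : ∀ x, β x x = 0)
include halt

theorem apply_swap (x y : G) : β y x = -β x y := by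
  have h := halt (x + y)
  simp only [map_add, AddMonoidHom.add_apply, halt, zero_add, add_zero] at h
  exact eq_neg_of_add_eq_zero_left h

theorem le_orthogonal_comm {H K : AddSubgroup G} : H ≤ orthogonal β K ↔ K ≤ orthogonal β H := by
  suffices ∀ H K : AddSubgroup G, H ≤ orthogonal β K → K ≤ orthogonal β H from ⟨this H K, this K H⟩
  intro H K hHK k hk
  refine mem_orthogonal.2 fun h hh => ?_
  rw [AddMonoidHom.mem_ker, apply_swap halt, neg_eq_zero]
  exact mem_orthogonal.1 (hHK hh) hk

theorem mem_orthogonal_zmultiples_self (x : G) : x ∈ orthogonal β (zmultiples x) :=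
  mem_orthogonal_zmultiples.2 (halt x)

theorem orthogonal_eq_self_of_maximal {H : AddSubgroup G} (hiso : H ≤ orthogonal β H)
    (hmax : ∀ K : AddSubgroup G, K ≤ orthogonal β K → H ≤ K → K = H) : orthogonal β H = H := by
  refine le_antisymm (fun x hx => ?_) hiso
  have hxH : zmultiples x ≤ orthogonal β H := zmultiples_le.2 hx
  have hK : H ⊔ zmultiples x ≤ orthogonal β (H ⊔ zmultiples x) := by
    rw [orthogonal_sup]
    refine sup_le (le_inf hiso ((le_orthogonal_comm halt).1 hxH)) (le_inf hxH ?_)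
    exact zmultiples_le.2 (mem_orthogonal_zmultiples_self halt x)
  rw [← hmax _ hK le_sup_left]
  exact mem_sup_right (mem_zmultiples x)

end Alternating


theorem exists_addOrderOf_apply_eq_exponent [Finite G] (hβ : Injective β) :
    ∃ x y, addOrderOf (β x y) = AddMonoid.exponent G := by
  obtain ⟨x, hx⟩ :=
    AddMonoid.exists_addOrderOf_eq_exponent (AddMonoid.ExponentExists.of_finite (G := G))
  obtain ⟨y, hy⟩ := (β x).exists_addOrderOf_apply_eq
  exact ⟨x, y, by rw [hy, addOrderOf_injective β hβ, hx]⟩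

variable (β) in
def restrict (Q : AddSubgroup G) : Q →+ Q →+ ℚ/ℤ := (β.compl₂ Q.subtype).comp Q.subtype

section Hyperbolic

variable {n : ℕ} {x y : G} (hexp : ∀ g : G, n • g = 0)

variable (β x y) in
noncomputable def hyperbolicSum :
    (ZMod n × ZMod n) × orthogonal β (zmultiples x ⊔ zmultiples y) →+ G :=
  ((ZMod.lift n ⟨zmultiplesHom G x, by simpa using hexp x⟩).coprod
    (ZMod.lift n ⟨zmultiplesHom G y, by simpa using hexp y⟩)).coprod (orthogonal β _).subtype

theorem hyperbolicSum_intCast (j k : ℤ) (q : orthogonal β (zmultiples x ⊔ zmultiples y)) :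
    hyperbolicSum β x y hexp ((j, k), q) = j • x + k • y + q := by
  simp [hyperbolicSum]

theorem mem_orthogonal_pair {g : G} :
    g ∈ orthogonal β (zmultiples x ⊔ zmultiples y) ↔ β g x = 0 ∧ β g y = 0 := by
  rw [orthogonal_sup, mem_inf, mem_orthogonal_zmultiples, mem_orthogonal_zmultiples]

theorem injective_restrict_orthogonal_pair (hβ : Injective β)
    (hsurj : Surjective (hyperbolicSum β x y hexp)) :
    Injective (restrict β (orthogonal β (zmultiples x ⊔ zmultiples y))) := by
  refine (injective_iff_map_eq_zero _).2 fun q hq =>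
    Subtype.ext <| (injective_iff_map_eq_zero β).1 hβ q <| AddMonoidHom.ext fun g => ?_
  obtain ⟨⟨⟨a, b⟩, q'⟩, rfl⟩ := hsurj g
  obtain ⟨j, rfl⟩ := ZMod.intCast_surjective a
  obtain ⟨k, rfl⟩ := ZMod.intCast_surjective b
  have hqq' : β q q' = 0 := DFunLike.congr_fun hq q'
  simp [hyperbolicSum_intCast, (mem_orthogonal_pair.1 q.2).1, (mem_orthogonal_pair.1 q.2).2, hqq']

variable (halt : ∀ x, β x x = 0)
include halt

theorem apply_hyperbolicSum_intCast_left (j k : ℤ)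
    (q : orthogonal β (zmultiples x ⊔ zmultiples y)) :
    β (hyperbolicSum β x y hexp ((j, k), q)) x = -(k • β x y) := by
  simp [hyperbolicSum_intCast, halt, apply_swap halt x y, (mem_orthogonal_pair.1 q.2).1]

theorem apply_hyperbolicSum_intCast_right (j k : ℤ)
    (q : orthogonal β (zmultiples x ⊔ zmultiples y)) :
    β (hyperbolicSum β x y hexp ((j, k), q)) y = j • β x y := by
  simp [hyperbolicSum_intCast, halt, (mem_orthogonal_pair.1 q.2).2]

theorem bijective_hyperbolicSum (hn : 0 < n) (hxy : addOrderOf (β x y) = n) :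
    Bijective (hyperbolicSum β x y hexp) := by
  have hdvd (j : ℤ) : j • β x y = 0 ↔ (n : ℤ) ∣ j := by
    rw [← hxy, addOrderOf_dvd_iff_zsmul_eq_zero]
  refine ⟨(injective_iff_map_eq_zero _).2 ?_, fun g => ?_⟩
  · rintro ⟨⟨a, b⟩, q⟩ h
    obtain ⟨j, rfl⟩ := ZMod.intCast_surjective a
    obtain ⟨k, rfl⟩ := ZMod.intCast_surjective b
    have hj : (n : ℤ) ∣ j := (hdvd j).1 <| by
      rw [← apply_hyperbolicSum_intCast_right hexp halt j k q, h, map_zero, AddMonoidHom.zero_apply]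
    have hk : (n : ℤ) ∣ k := (hdvd k).1 <| neg_eq_zero.1 <| by
      rw [← apply_hyperbolicSum_intCast_left hexp halt j k q, h, map_zero, AddMonoidHom.zero_apply]
    have hq : q = 0 := by
      rw [hyperbolicSum_intCast, zsmul_eq_zero_of_dvd hexp hj, zsmul_eq_zero_of_dvd hexp hk,
        zero_add, zero_add] at h
      exact Subtype.ext h
    rw [(ZMod.intCast_zmod_eq_zero_iff_dvd j n).2 hj, (ZMod.intCast_zmod_eq_zero_iff_dvd k n).2 hk,
      hq]
    rfl
  · have hmem (z : G) : β g z ∈ zmultiples (β x y) := by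
      rw [← SetLike.mem_coe, ← AddCircle.torsion_rat_eq_zmultiples hn hxy, Set.mem_ofPred_eq,
        ← AddMonoidHom.nsmul_apply, ← map_nsmul, hexp, map_zero, AddMonoidHom.zero_apply]
    obtain ⟨j, hj⟩ := mem_zmultiples_iff.1 (hmem y)
    obtain ⟨k, hk⟩ := mem_zmultiples_iff.1 (hmem x)
    have hq : g - j • x + k • y ∈ orthogonal β (zmultiples x ⊔ zmultiples y) := by
      rw [mem_orthogonal_pair]
      constructor <;> simp [halt, apply_swap halt x y, hj, hk]
    refine ⟨((j, ((-k : ℤ) : ZMod n)), ⟨_, hq⟩), ?_⟩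
    rw [hyperbolicSum_intCast, neg_zsmul]
    dsimp only
    abel

end Hyperbolic

variable (halt : ∀ x, β x x = 0)
include halt

theorem exists_hyperbolic_splitting [Finite G] [Nontrivial G] (hβ : Injective β) :
    ∃ (n : ℕ) (Q : AddSubgroup G), 1 < n ∧ Nonempty (G ≃+ (ZMod n × ZMod n) × Q) ∧
      Injective (restrict β Q) := by
  obtain ⟨x, y, hxy⟩ := exists_addOrderOf_apply_eq_exponent hβ
  have hn : 1 < AddMonoid.exponent G := AddMonoid.one_lt_exponent
  have hbij := bijective_hyperbolicSum AddMonoid.exponent_nsmul_eq_zero halt (by omega) hxy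
  exact ⟨_, _, hn, ⟨(AddEquiv.ofBijective _ hbij).symm⟩,
    injective_restrict_orthogonal_pair _ hβ hbij.2⟩

theorem exists_addEquiv_prod_self [Finite G] (hβ : Injective β) :
    ∃ (H : Type) (_ : AddCommGroup H) (_ : Fintype H), Nonempty (G ≃+ H × H) := by
  induction hN : Nat.card G using Nat.strong_induction_on generalizing G with
  | _ N ih =>
  rcases subsingleton_or_nontrivial G with hG | hG
  · exact ⟨PUnit, inferInstance, inferInstance, ⟨AddEquiv.ofBijective (0 : G →+ PUnit × PUnit)
      ⟨fun a b _ => Subsingleton.elim a b, fun _ => ⟨0, Subsingleton.elim _ _⟩⟩⟩⟩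
  obtain ⟨n, Q, hn, ⟨e⟩, hQ⟩ := exists_hyperbolic_splitting halt hβ
  have : NeZero n := ⟨by omega⟩
  have hQN : Nat.card Q < N := by
    rw [← hN, Nat.card_congr e.toEquiv, Nat.card_prod, Nat.card_prod, Nat.card_zmod]
    exact lt_mul_of_one_lt_left Nat.card_pos (Nat.one_lt_mul_iff.2 ⟨by omega, by omega, by omega⟩)
  obtain ⟨H, _, _, ⟨eQ⟩⟩ := ih _ hQN (β := restrict β Q) (fun q => halt q) hQ rfl
  exact ⟨ZMod n × H, inferInstance, inferInstance,
    ⟨e.trans (((AddEquiv.refl _).prodCongr eQ).trans (AddEquiv.prodProdProdComm _ _ _ _))⟩⟩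

end Pairing

open Pairing in
theorem odd_symplectic_group_structure_general
    (G : Type*) [AddCommGroup G] [Fintype G]
    (B : G → G → ℚ ⧸ AddSubgroup.zmultiples (1 : ℚ))
    (hadd_left : ∀ x y z : G, B (x + y) z = B x z + B y z)
    (hadd_right : ∀ x y z : G, B x (y + z) = B x y + B x z)
    (halt : ∀ x : G, B x x = 0)
    (hnondeg : ∀ x : G, (∀ y : G, B x y = 0) → x = 0) :
    (∃ (H : Type) (_ : AddCommGroup H) (_ : Fintype H),
        Nonempty (G ≃+ H × H))
    ∧ ∀ H : AddSubgroup G,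
        (∀ x ∈ H, ∀ y ∈ H, B x y = 0) →
        (∀ K : AddSubgroup G, (∀ x ∈ K, ∀ y ∈ K, B x y = 0) → H ≤ K → K = H) →
        (Nat.card H : ℝ) = Real.sqrt (Fintype.card G) := by
  let β : G →+ G →+ ℚ/ℤ := AddMonoidHom.mk' (fun x => AddMonoidHom.mk' (B x) (hadd_right x))
    fun x y => AddMonoidHom.ext (hadd_left x y)
  have hβ : Injective β := (injective_iff_map_eq_zero β).2 fun x hx =>
    hnondeg x fun y => DFunLike.congr_fun hx y
  have isotropic_iff (K : AddSubgroup G) : K ≤ orthogonal β K ↔ ∀ x ∈ K, ∀ y ∈ K, B x y = 0 :=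
    forall₂_congr fun x _ => mem_orthogonal.trans SetLike.le_def
  refine ⟨exists_addEquiv_prod_self halt hβ, fun H hiso hmax => ?_⟩
  have hH : orthogonal β H = H := orthogonal_eq_self_of_maximal halt ((isotropic_iff H).2 hiso)
    fun K hK => hmax K ((isotropic_iff K).1 hK)
  have hcard := card_orthogonal_mul_card hβ H
  rw [hH] at hcard
  rw [← Nat.card_eq_fintype_card, ← hcard, Nat.cast_mul, Real.sqrt_mul_self (Nat.cast_nonneg _)]

theorem odd_symplectic_group_structure
    (G : Type*) [AddCommGroup G] [Fintype G] (hodd : Odd (Fintype.card G))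
    (B : G → G → ℚ ⧸ AddSubgroup.zmultiples (1 : ℚ))
    (hadd_left : ∀ x y z : G, B (x + y) z = B x z + B y z)
    (hadd_right : ∀ x y z : G, B x (y + z) = B x y + B x z)
    (halt : ∀ x : G, B x x = 0)
    (hnondeg : ∀ x : G, (∀ y : G, B x y = 0) → x = 0) :
    (∃ (H : Type) (_ : AddCommGroup H) (_ : Fintype H),
        Nonempty (G ≃+ H × H))
    ∧ ∀ H : AddSubgroup G,
        (∀ x ∈ H, ∀ y ∈ H, B x y = 0) →
        (∀ K : AddSubgroup G, (∀ x ∈ K, ∀ y ∈ K, B x y = 0) → H ≤ K → K = H) →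
        (Nat.card H : ℝ) = Real.sqrt (Fintype.card G) :=
  odd_symplectic_group_structure_general G B hadd_left hadd_right halt hnondeg
end
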